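/- Let A = k⟨α₁,…,α_L⟩ be the free unital algebra, and let φ⁻ be the involution with φ⁻(α_{i₁}…α_{i_k}) = (−1)^k α_{i_k}…α_{i₁}. Let s^k_{ij} ∈ k be the structure constants of an associative multiplication on k^L, and let {{-,-}} be the linear double Poisson bracket with {{α_i, α_j}} = Σ_k (s^k_{ij}(α_k ⊗ 1) − s^k_{ji}(1 ⊗ α_k)). Then {{-,-}} is φ⁻-adapted (i.e. (φ⁻⊗φ⁻)({{a,b}}) = {{φ⁻(a),φ⁻(b)}}° for all a,b) if and only if s^k_{ij} = s^k_{ji} for all i,j,k, i.e. the multiplication on k^L is commutative. -/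

import Mathlib

/-!
Both sides of the adaptedness identity are additive and, thanks to the Leibniz rule and `φ⁻`
being an anti-automorphism, compatible with products in the second argument; by skew-symmetry
the identity is moreover symmetric in its two arguments. Hence it suffices to check it on pairs
of generators, where the difference of the two sides is
`∑ₚ (s^p_{ji} - s^p_{ij}) (αₚ ⊗ 1 + 1 ⊗ αₚ)`, which vanishes exactly when `s^p_{ij} = s^p_{ji}`
since `2 ≠ 0`.
-/

open TensorProduct

noncomputable section

/-- The cyclic permutation `(123)` on a triple tensor product, `x ⊗ y ⊗ z ↦ z ⊗ x ⊗ y`. -/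
def cyclicPerm (k V : Type*) [CommRing k] [AddCommGroup V] [Module k V] :
    V ⊗[k] (V ⊗[k] V) →ₗ[k] V ⊗[k] (V ⊗[k] V) :=
  (TensorProduct.comm k (V ⊗[k] V) V).toLinearMap ∘ₗ
    (TensorProduct.assoc k V V V).symm.toLinearMap

/-- For a double bracket `D` and `a : A`, the map `{{a, -}}_L : A ⊗ A → A ⊗ A ⊗ A`. -/
def bracketLeft (k A : Type*) [CommRing k] [Ring A] [Algebra k A]
    (D : A →ₗ[k] A →ₗ[k] A ⊗[k] A) (a : A) :
    A ⊗[k] A →ₗ[k] A ⊗[k] (A ⊗[k] A) :=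
  (TensorProduct.assoc k A A A).toLinearMap ∘ₗ LinearMap.rTensor A (D a)

namespace DoubleBracket

variable {k A : Type*} [CommRing k] [Ring A] [Algebra k A]

theorem comp_mulRight_of_anti {φ : A →ₗ[k] A} (hφ : ∀ x y, φ (x * y) = φ y * φ x) (c : A) :
    φ ∘ₗ LinearMap.mulRight k c = LinearMap.mulLeft k (φ c) ∘ₗ φ := by
  ext x; simp [hφ]

theorem comp_mulLeft_of_anti {φ : A →ₗ[k] A} (hφ : ∀ x y, φ (x * y) = φ y * φ x) (b : A) :
    φ ∘ₗ LinearMap.mulLeft k b = LinearMap.mulRight k (φ b) ∘ₗ φ := by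
  ext x; simp [hφ]

def IsLeibniz (D : A →ₗ[k] A →ₗ[k] A ⊗[k] A) : Prop :=
  ∀ a b c, D a (b * c) = LinearMap.lTensor _ (LinearMap.mulRight k c) (D a b)
    + LinearMap.rTensor _ (LinearMap.mulLeft k b) (D a c)

theorem IsLeibniz.apply_one {D : A →ₗ[k] A →ₗ[k] A ⊗[k] A} (hleib : IsLeibniz D) (a : A) :
    D a 1 = 0 := by
  have h := hleib a 1 1
  rwa [mul_one, LinearMap.mulRight_one, LinearMap.mulLeft_one, LinearMap.lTensor_id,
    LinearMap.rTensor_id, LinearMap.id_apply, left_eq_add] at h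

def IsAdaptedAt (D : A →ₗ[k] A →ₗ[k] A ⊗[k] A) (φ : A →ₗ[k] A) (a b : A) : Prop :=
  map φ φ (D a b) = TensorProduct.comm k A A (D (φ a) (φ b))

variable {D : A →ₗ[k] A →ₗ[k] A ⊗[k] A} {φ : A →ₗ[k] A}

theorem IsAdaptedAt.symm (hskew : ∀ a b, D a b = -TensorProduct.comm k A A (D b a)) {a b : A}
    (h : IsAdaptedAt D φ a b) : IsAdaptedAt D φ b a := by
  rw [IsAdaptedAt, hskew b a, hskew (φ b) (φ a), map_neg, map_neg, map_comm, h]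

theorem IsAdaptedAt.add {a b c : A} (hb : IsAdaptedAt D φ a b) (hc : IsAdaptedAt D φ a c) :
    IsAdaptedAt D φ a (b + c) := by
  rw [IsAdaptedAt, map_add, map_add, map_add, map_add, hb, hc, map_add]

theorem IsAdaptedAt.mul
    (hleib : IsLeibniz D)
    (hφ : ∀ x y, φ (x * y) = φ y * φ x) {a b c : A}
    (hb : IsAdaptedAt D φ a b) (hc : IsAdaptedAt D φ a c) :
    IsAdaptedAt D φ a (b * c) := by
  rw [IsAdaptedAt, hleib, hφ, hleib, map_add, map_add, LinearMap.map_lTensor,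
    LinearMap.map_rTensor, comp_mulRight_of_anti hφ, comp_mulLeft_of_anti hφ,
    ← LinearMap.lTensor_map, ← LinearMap.rTensor_map, hb, hc, LinearMap.lTensor_comm,
    LinearMap.rTensor_comm, add_comm]

theorem isAdaptedAt_algebraMap
    (hleib : IsLeibniz D)
    (hφone : φ 1 = 1) (a : A) (r : k) :
    IsAdaptedAt D φ a (algebraMap k A r) := by
  simp only [IsAdaptedAt, Algebra.algebraMap_eq_smul_one, map_smul, hφone,
    hleib.apply_one, smul_zero, map_zero]

section FreeAlgebra

open FreeAlgebra

variable {X : Type*}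
  {D : FreeAlgebra k X →ₗ[k] FreeAlgebra k X →ₗ[k] FreeAlgebra k X ⊗[k] FreeAlgebra k X}
  {φ : FreeAlgebra k X →ₗ[k] FreeAlgebra k X}

theorem isAdaptedAt_of_forall_ι
    (hleib : IsLeibniz D)
    (hφ : ∀ x y, φ (x * y) = φ y * φ x) (hφone : φ 1 = 1) {a : FreeAlgebra k X}
    (h : ∀ i, IsAdaptedAt D φ a (ι k i)) (b : FreeAlgebra k X) : IsAdaptedAt D φ a b := by
  induction b using FreeAlgebra.induction with
  | grade0 r => exact isAdaptedAt_algebraMap hleib hφone a r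
  | grade1 i => exact h i
  | mul x y hx hy => exact hx.mul hleib hφ hy
  | add x y hx hy => exact hx.add hy

theorem forall_isAdaptedAt_iff_forall_ι
    (hskew : ∀ a b, D a b = -TensorProduct.comm k _ _ (D b a))
    (hleib : IsLeibniz D)
    (hφ : ∀ x y, φ (x * y) = φ y * φ x) (hφone : φ 1 = 1) :
    (∀ a b, IsAdaptedAt D φ a b) ↔ ∀ i j, IsAdaptedAt D φ (ι k i) (ι k j) := by
  refine ⟨fun h i j => h _ _, fun h a => isAdaptedAt_of_forall_ι hleib hφ hφone fun j => ?_⟩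
  exact (isAdaptedAt_of_forall_ι hleib hφ hφone (h j) a).symm hskew

theorem sum_smul_ι_tmul_one_add_one_tmul_ι_eq_zero_iff [Fintype X] [NoZeroDivisors k]
    [CharZero k] (c : X → k) :
    ∑ p, c p • (ι k p ⊗ₜ[k] (1 : FreeAlgebra k X) + 1 ⊗ₜ ι k p) = 0 ↔ ∀ p, c p = 0 := by
  classical
  refine ⟨fun h q => ?_, fun h => by simp [h]⟩
  -- Evaluating both factors at the character `ι p ↦ [p = q]` and multiplying reads off `2 c q`.
  let ev : FreeAlgebra k X →ₐ[k] k := lift k (Pi.single q 1)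
  have h2 := congrArg (LinearMap.mul' k k ∘ₗ map ev.toLinearMap ev.toLinearMap) h
  simpa [ev, Pi.single_apply, Finset.sum_add_distrib] using h2

theorem map_apply_ι_sub_comm_apply_ι [Fintype X] {s : X → X → X → k}
    (hval : ∀ i j, D (ι k i) (ι k j)
      = ∑ p, (s p i j • (ι k p ⊗ₜ[k] (1 : FreeAlgebra k X)) - s p j i • (1 ⊗ₜ[k] ι k p)))
    (hφone : φ 1 = 1) (hφgen : ∀ i, φ (ι k i) = -ι k i) (i j : X) :
    map φ φ (D (ι k i) (ι k j)) - TensorProduct.comm k _ _ (D (φ (ι k i)) (φ (ι k j)))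
      = ∑ p, (s p j i - s p i j) • (ι k p ⊗ₜ[k] (1 : FreeAlgebra k X) + 1 ⊗ₜ ι k p) := by
  simp only [hφgen, map_neg, LinearMap.neg_apply, neg_neg, hval, map_sum, map_sub, map_smul,
    map_tmul, comm_tmul, hφone, ← Finset.sum_sub_distrib]
  refine Finset.sum_congr rfl fun p _ => ?_
  simp only [neg_tmul, tmul_neg, smul_neg, smul_add, sub_smul]
  abel

theorem isAdaptedAt_ι_iff [Fintype X] [NoZeroDivisors k] [CharZero k] {s : X → X → X → k}
    (hval : ∀ i j, D (ι k i) (ι k j)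
      = ∑ p, (s p i j • (ι k p ⊗ₜ[k] (1 : FreeAlgebra k X)) - s p j i • (1 ⊗ₜ[k] ι k p)))
    (hφone : φ 1 = 1) (hφgen : ∀ i, φ (ι k i) = -ι k i) (i j : X) :
    IsAdaptedAt D φ (ι k i) (ι k j) ↔ ∀ p, s p i j = s p j i := by
  rw [IsAdaptedAt, ← sub_eq_zero, map_apply_ι_sub_comm_apply_ι hval hφone hφgen,
    sum_smul_ι_tmul_one_add_one_tmul_ι_eq_zero_iff]
  simp only [sub_eq_zero, eq_comm]

end FreeAlgebra

end DoubleBracket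

theorem linear_bracket_phi_minus_adapted_iff_general
    (k : Type*) [Field k] [CharZero k] (L : ℕ)
    (s : Fin L → Fin L → Fin L → k)
    (D : FreeAlgebra k (Fin L) →ₗ[k] FreeAlgebra k (Fin L) →ₗ[k]
      FreeAlgebra k (Fin L) ⊗[k] FreeAlgebra k (Fin L))
    (hskew : ∀ a b, D a b = - (TensorProduct.comm k _ _) (D b a))
    (hleib : ∀ a b c, D a (b * c)
      = LinearMap.lTensor _ (LinearMap.mulRight k c) (D a b)
        + LinearMap.rTensor _ (LinearMap.mulLeft k b) (D a c))
    (hval : ∀ i j : Fin L, D (FreeAlgebra.ι k i) (FreeAlgebra.ι k j)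
      = ∑ p : Fin L, (s p i j • (FreeAlgebra.ι k p ⊗ₜ[k] (1 : FreeAlgebra k (Fin L)))
          - s p j i • ((1 : FreeAlgebra k (Fin L)) ⊗ₜ[k] FreeAlgebra.ι k p)))
    (φ : FreeAlgebra k (Fin L) →ₗ[k] FreeAlgebra k (Fin L))
    (hφanti : ∀ x y, φ (x * y) = φ y * φ x)
    (hφone : φ 1 = 1)
    (hφgen : ∀ i : Fin L, φ (FreeAlgebra.ι k i) = - FreeAlgebra.ι k i) :
    (∀ a b, TensorProduct.map φ φ (D a b) = (TensorProduct.comm k _ _) (D (φ a) (φ b)))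
      ↔ (∀ p i j : Fin L, s p i j = s p j i) := by
  change (∀ a b, DoubleBracket.IsAdaptedAt D φ a b) ↔ _
  rw [DoubleBracket.forall_isAdaptedAt_iff_forall_ι hskew hleib hφanti hφone]
  simp only [DoubleBracket.isAdaptedAt_ι_iff hval hφone hφgen]
  exact ⟨fun h p i j => h i j p, fun h i j p => h p i j⟩

/-- a linear double Poisson bracket on the free algebra, given by structure
constants `s` of an associative multiplication on `k^L`, is `φ⁻`-adapted
if and only if `s^k_{ij} = s^k_{ji}`, i.e. the multiplication is commutative. -/
theorem linear_bracket_phi_minus_adapted_iff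
    (k : Type*) [Field k] [CharZero k] (L : ℕ)
    (s : Fin L → Fin L → Fin L → k)
    (hassoc : ∀ i j l m : Fin L,
      ∑ p : Fin L, s p i j * s m p l = ∑ p : Fin L, s m i p * s p j l)
    (D : FreeAlgebra k (Fin L) →ₗ[k] FreeAlgebra k (Fin L) →ₗ[k]
      FreeAlgebra k (Fin L) ⊗[k] FreeAlgebra k (Fin L))
    (hskew : ∀ a b, D a b = - (TensorProduct.comm k _ _) (D b a))
    (hleib : ∀ a b c, D a (b * c)
      = LinearMap.lTensor _ (LinearMap.mulRight k c) (D a b)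
        + LinearMap.rTensor _ (LinearMap.mulLeft k b) (D a c))
    (hjac : ∀ a b c, bracketLeft k _ D a (D b c)
        + cyclicPerm k _ (bracketLeft k _ D b (D c a))
        + cyclicPerm k _ (cyclicPerm k _ (bracketLeft k _ D c (D a b))) = 0)
    (hval : ∀ i j : Fin L, D (FreeAlgebra.ι k i) (FreeAlgebra.ι k j)
      = ∑ p : Fin L, (s p i j • (FreeAlgebra.ι k p ⊗ₜ[k] (1 : FreeAlgebra k (Fin L)))
          - s p j i • ((1 : FreeAlgebra k (Fin L)) ⊗ₜ[k] FreeAlgebra.ι k p)))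
    (φ : FreeAlgebra k (Fin L) →ₗ[k] FreeAlgebra k (Fin L))
    (hφanti : ∀ x y, φ (x * y) = φ y * φ x)
    (hφone : φ 1 = 1)
    (hφgen : ∀ i : Fin L, φ (FreeAlgebra.ι k i) = - FreeAlgebra.ι k i) :
    (∀ a b, TensorProduct.map φ φ (D a b) = (TensorProduct.comm k _ _) (D (φ a) (φ b)))
      ↔ (∀ p i j : Fin L, s p i j = s p j i) :=
  linear_bracket_phi_minus_adapted_iff_general k L s D hskew hleib hval φ hφanti hφone hφgen

end
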